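/- Let φ: ℝⁿ → ℝ be a convex function whose distributional Hessian satisfies ∇²φ ≥ C_K·I (as measures) on every compact K ⊂ ℝⁿ for some C_K > 0, and whose subgradient image ∂φ(ℝⁿ) is dense in a bounded open convex set P. Then the Legendre transform u = φ* is C^{1,1}_loc on P: on the closure of ∂φ(K) ∩ P, the distributional Hessian satisfies ∂²u ≤ C_K^{-1}·I. -/
import Mathlib


open MeasureTheory Filter Topology
open scoped RealInnerProductSpace

variable {n : ℕ}

/-- The subgradient image `∂φ(K)` of a set `K` under a convex function `φ : ℝⁿ → ℝ`. -/
def subgradImage (φ : EuclideanSpace ℝ (Fin n) → ℝ) (K : Set (EuclideanSpace ℝ (Fin n))) :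
    Set (EuclideanSpace ℝ (Fin n)) :=
  {y | ∃ x ∈ K, ∀ z, φ x + ⟪y, z - x⟫ ≤ φ z}

section Aux

open Metric Set

-- norm identity
lemma combo_norm_sq (a b : EuclideanSpace ℝ (Fin n)) (t : ℝ) :
    ‖a + t • (b - a)‖ ^ 2
      = (1 - t) * ‖a‖ ^ 2 + t * ‖b‖ ^ 2 - t * (1 - t) * ‖b - a‖ ^ 2 := by
  simp only [← real_inner_self_eq_norm_sq, inner_add_left, inner_add_right, inner_sub_left,
    inner_sub_right, real_inner_smul_left, real_inner_smul_right]
  rw [real_inner_comm a b]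
  ring

-- half strong convexity inequality
lemma subgrad_strong (φ : EuclideanSpace ℝ (Fin n) → ℝ) {K : Set (EuclideanSpace ℝ (Fin n))}
    {c : ℝ} (hK : Convex ℝ K) (hψ : ConvexOn ℝ K (fun x => φ x - c / 2 * ‖x‖ ^ 2))
    {x₁ x₂ y₁ : EuclideanSpace ℝ (Fin n)} (hx₁ : x₁ ∈ K) (hx₂ : x₂ ∈ K)
    (h₁ : ∀ z, φ x₁ + ⟪y₁, z - x₁⟫ ≤ φ z) :
    φ x₁ + ⟪y₁, x₂ - x₁⟫ + c / 2 * ‖x₂ - x₁‖ ^ 2 ≤ φ x₂ := by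
  have key : ∀ t ∈ Set.Ioo (0:ℝ) 1,
      φ x₁ + ⟪y₁, x₂ - x₁⟫ + c / 2 * (1 - t) * ‖x₂ - x₁‖ ^ 2 ≤ φ x₂ := by
    intro t ht
    set xt := x₁ + t • (x₂ - x₁) with hxt
    have hmem : xt ∈ K := by
      have := hK hx₁ hx₂ (by linarith [ht.2] : (0:ℝ) ≤ 1 - t) ht.1.le (by ring)
      convert this using 1
      rw [hxt]
      module
    have hconv := hψ.2 hx₁ hx₂ (by linarith [ht.2] : (0:ℝ) ≤ 1 - t) ht.1.le (by ring)
    have hsub := h₁ xt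
    have hinner : ⟪y₁, xt - x₁⟫ = t * ⟪y₁, x₂ - x₁⟫ := by
      rw [hxt]; rw [show x₁ + t • (x₂ - x₁) - x₁ = t • (x₂ - x₁) by abel, real_inner_smul_right]
    have hnorm : ‖xt‖ ^ 2 = (1 - t) * ‖x₁‖ ^ 2 + t * ‖x₂‖ ^ 2 - t * (1 - t) * ‖x₂ - x₁‖ ^ 2 :=
      combo_norm_sq x₁ x₂ t
    have h2 : ((1:ℝ) - t) • x₁ + t • x₂ = xt := by rw [hxt]; module
    rw [h2] at hconv
    simp only at hconv
    rw [hinner] at hsub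
    rw [hnorm] at hconv
    simp only [smul_eq_mul] at hconv
    have ht0 : 0 < t := ht.1
    have h3 : t * (φ x₁ + ⟪y₁, x₂ - x₁⟫ + c / 2 * (1 - t) * ‖x₂ - x₁‖ ^ 2) ≤ t * φ x₂ := by
      nlinarith [hconv, hsub]
    exact le_of_mul_le_mul_left h3 ht0
  have hlim : Filter.Tendsto
      (fun t : ℝ => φ x₁ + ⟪y₁, x₂ - x₁⟫ + c / 2 * (1 - t) * ‖x₂ - x₁‖ ^ 2)
      (𝓝[>] (0:ℝ)) (𝓝 (φ x₁ + ⟪y₁, x₂ - x₁⟫ + c / 2 * (1 - 0) * ‖x₂ - x₁‖ ^ 2)) := by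
    apply Filter.Tendsto.mono_left _ nhdsWithin_le_nhds
    exact (Continuous.tendsto (by continuity) 0)
  have := le_of_tendsto hlim (by
    filter_upwards [Ioo_mem_nhdsGT (zero_lt_one)] with t ht using key t ht)
  simpa using this

lemma strong_mono (φ : EuclideanSpace ℝ (Fin n) → ℝ) {K : Set (EuclideanSpace ℝ (Fin n))}
    {c : ℝ} (hK : Convex ℝ K) (hψ : ConvexOn ℝ K (fun x => φ x - c / 2 * ‖x‖ ^ 2))
    {x₁ x₂ y₁ y₂ : EuclideanSpace ℝ (Fin n)} (hx₁ : x₁ ∈ K) (hx₂ : x₂ ∈ K)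
    (h₁ : ∀ z, φ x₁ + ⟪y₁, z - x₁⟫ ≤ φ z) (h₂ : ∀ z, φ x₂ + ⟪y₂, z - x₂⟫ ≤ φ z) :
    c * ‖x₁ - x₂‖ ^ 2 ≤ ⟪y₁ - y₂, x₁ - x₂⟫ := by
  have A := subgrad_strong φ hK hψ hx₁ hx₂ h₁
  have B := subgrad_strong φ hK hψ hx₂ hx₁ h₂
  have e1 : ⟪y₁ - y₂, x₁ - x₂⟫ = ⟪y₁, x₁ - x₂⟫ - ⟪y₂, x₁ - x₂⟫ := inner_sub_left _ _ _
  have e2 : ⟪y₁, x₂ - x₁⟫ = -⟪y₁, x₁ - x₂⟫ := by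
    rw [show x₂ - x₁ = -(x₁ - x₂) by abel, inner_neg_right]
  have e3 : ‖x₂ - x₁‖ = ‖x₁ - x₂‖ := norm_sub_rev _ _
  rw [e3, e2] at A
  linarith

-- key bound from strong monotonicity: ‖x₁ - x₂‖ ≤ c⁻¹ * ‖y₁ - y₂‖
lemma dist_bound {c a b : ℝ} (hc : 0 < c) (h : c * a ^ 2 ≤ b * a) (ha : 0 ≤ a) (hb : 0 ≤ b) :
    a ≤ c⁻¹ * b := by
  rcases eq_or_lt_of_le ha with h0 | h0
  · rw [← h0]; positivity
  · rw [le_inv_mul_iff₀ hc]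
    nlinarith

lemma ball_bound (φ : EuclideanSpace ℝ (Fin n) → ℝ)
    {P : Set (EuclideanSpace ℝ (Fin n))} (hP : IsOpen P)
    (hdense : P ⊆ closure {y | ∃ x, ∀ z, φ x + ⟪y, z - x⟫ ≤ φ z})
    {y : EuclideanSpace ℝ (Fin n)} (hy : y ∈ P) :
    ∃ ε > 0, ∃ M : ℝ, ∀ y' ∈ Metric.ball y ε, ∀ x, ⟪x, y'⟫ - φ x ≤ M := by
  classical
  set S : Set (EuclideanSpace ℝ (Fin n)) := {w | ∃ M : ℝ, ∀ x, ⟪x, w⟫ - φ x ≤ M} with hS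
  have hSconv : Convex ℝ S := by
    rintro w₁ ⟨M₁, h₁⟩ w₂ ⟨M₂, h₂⟩ a b ha hb hab
    refine ⟨a * M₁ + b * M₂, fun x => ?_⟩
    have e : ⟪x, a • w₁ + b • w₂⟫ = a * ⟪x, w₁⟫ + b * ⟪x, w₂⟫ := by
      rw [inner_add_right, real_inner_smul_right, real_inner_smul_right]
    have t₁ : a * (⟪x, w₁⟫ - φ x) ≤ a * M₁ := mul_le_mul_of_nonneg_left (h₁ x) ha
    have t₂ : b * (⟪x, w₂⟫ - φ x) ≤ b * M₂ := mul_le_mul_of_nonneg_left (h₂ x) hb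
    have : a * φ x + b * φ x = φ x := by rw [← add_mul, hab, one_mul]
    nlinarith
  have hDS : {w | ∃ x, ∀ z, φ x + ⟪w, z - x⟫ ≤ φ z} ⊆ S := by
    rintro w ⟨x₀, hx₀⟩
    refine ⟨⟪x₀, w⟫ - φ x₀, fun x => ?_⟩
    have := hx₀ x
    have e : ⟪w, x - x₀⟫ = ⟪x, w⟫ - ⟪x₀, w⟫ := by
      rw [inner_sub_right, real_inner_comm w x, real_inner_comm w x₀]
    linarith
  have hPS : P ⊆ closure S := fun p hp => closure_mono hDS (hdense hp)
  -- y is in the interior of closure S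
  have hyint : y ∈ interior (closure S) := interior_maximal hPS hP hy
  -- affine span of S is top
  have hspan : affineSpan ℝ S = ⊤ := by
    have h1 : (interior (closure S)).Nonempty := ⟨y, hyint⟩
    have h2 : affineSpan ℝ (closure S) = ⊤ :=
      ((hSconv.closure).interior_nonempty_iff_affineSpan_eq_top).mp h1
    have h3 : closure S ⊆ (affineSpan ℝ S : Set (EuclideanSpace ℝ (Fin n))) :=
      closure_minimal (subset_affineSpan ℝ S) (affineSpan ℝ S).closed_of_finiteDimensional
    have h4 : affineSpan ℝ (closure S) ≤ affineSpan ℝ S := affineSpan_le.mpr h3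
    rw [h2] at h4
    exact top_le_iff.mp h4
  have hSint : (interior S).Nonempty :=
    (hSconv.interior_nonempty_iff_affineSpan_eq_top).mpr hspan
  obtain ⟨z, hz⟩ := hSint
  -- y ∈ interior S
  have hyintS : y ∈ interior S := by
    by_cases hyz : y = z
    · rwa [hyz]
    obtain ⟨δ, hδ, hball⟩ := Metric.isOpen_iff.mp isOpen_interior y hyint
    have hnz : ‖y - z‖ ≠ 0 := by
      simpa [sub_eq_zero] using hyz
    have hnzpos : 0 < ‖y - z‖ := lt_of_le_of_ne (norm_nonneg _) (Ne.symm hnz)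
    set t : ℝ := δ / (2 * ‖y - z‖) with htdef
    have ht : 0 < t := by positivity
    set w : EuclideanSpace ℝ (Fin n) := y + t • (y - z) with hw
    have hwball : w ∈ Metric.ball y δ := by
      rw [Metric.mem_ball, dist_eq_norm]
      have : w - y = t • (y - z) := by rw [hw]; abel
      rw [this, norm_smul, Real.norm_eq_abs, abs_of_pos ht, htdef]
      have he : ‖y - z‖ * (δ / (2 * ‖y - z‖)) = δ / 2 := by
        field_simp
      rw [mul_comm] at he
      rw [he]
      linarith
    have hwcl : w ∈ closure S := interior_subset (hball hwball)
    have hcombo := hSconv.combo_interior_closure_mem_interior hz hwcl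
      (a := t / (1 + t)) (b := 1 / (1 + t))
      (by positivity) (by positivity) (by field_simp; ring)
    have : (t / (1 + t)) • z + (1 / (1 + t)) • w = y := by
      rw [hw]
      have h1t : (1:ℝ) + t ≠ 0 := by positivity
      rw [smul_add, smul_smul, smul_sub]
      match_scalars <;> field_simp <;> ring
    rwa [this] at hcombo
  -- the conjugate function is convex on interior S, hence continuous, hence locally bounded
  set g : EuclideanSpace ℝ (Fin n) → ℝ := fun w => ⨆ x, (⟪x, w⟫ - φ x) with hg
  have hbdd : ∀ w ∈ S, BddAbove (Set.range fun x => ⟪x, w⟫ - φ x) := by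
    rintro w ⟨M, hM⟩
    exact ⟨M, by rintro _ ⟨x, rfl⟩; exact hM x⟩
  have hgconv : ConvexOn ℝ (interior S) g := by
    refine ⟨hSconv.interior, fun w₁ h₁ w₂ h₂ a b ha hb hab => ?_⟩
    have h₁' : w₁ ∈ S := interior_subset h₁
    have h₂' : w₂ ∈ S := interior_subset h₂
    refine ciSup_le fun x => ?_
    have e : ⟪x, a • w₁ + b • w₂⟫ - φ x
        = a * (⟪x, w₁⟫ - φ x) + b * (⟪x, w₂⟫ - φ x) := by
      rw [inner_add_right, real_inner_smul_right, real_inner_smul_right]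
      have : a * φ x + b * φ x = φ x := by rw [← add_mul, hab, one_mul]
      linarith
    rw [e]
    have t₁ : ⟪x, w₁⟫ - φ x ≤ g w₁ := le_ciSup (hbdd w₁ h₁') x
    have t₂ : ⟪x, w₂⟫ - φ x ≤ g w₂ := le_ciSup (hbdd w₂ h₂') x
    have := add_le_add (mul_le_mul_of_nonneg_left t₁ ha) (mul_le_mul_of_nonneg_left t₂ hb)
    simpa [smul_eq_mul] using this
  have hgcont : ContinuousOn g (interior S) := hgconv.continuousOn isOpen_interior
  obtain ⟨ε, hε, hballS⟩ := Metric.isOpen_iff.mp isOpen_interior y hyintS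
  have hcb : Metric.closedBall y (ε / 2) ⊆ interior S := fun p hp =>
    hballS (lt_of_le_of_lt (Metric.mem_closedBall.mp hp) (by linarith))
  have hcompact : IsCompact (Metric.closedBall y (ε / 2)) := isCompact_closedBall y (ε / 2)
  obtain ⟨p₀, hp₀, hp₀max⟩ := hcompact.exists_isMaxOn
    ⟨y, Metric.mem_closedBall_self (by linarith)⟩ (hgcont.mono hcb)
  refine ⟨ε / 2, by linarith, g p₀, fun y' hy' x => ?_⟩
  have hy'cb : y' ∈ Metric.closedBall y (ε / 2) := Metric.ball_subset_closedBall hy'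
  have hy'S : y' ∈ S := interior_subset (hcb hy'cb)
  exact le_trans (le_ciSup (hbdd y' hy'S) x) (hp₀max hy'cb)

lemma exists_maximizer (φ : EuclideanSpace ℝ (Fin n) → ℝ) (hφc : Continuous φ)
    {y : EuclideanSpace ℝ (Fin n)} {ε M : ℝ} (hε : 0 < ε)
    (hball : ∀ y' ∈ Metric.ball y ε, ∀ x, ⟪x, y'⟫ - φ x ≤ M) :
    ∃ R : ℝ, 0 ≤ R ∧ ∀ y' ∈ Metric.ball y (ε / 2), ∃ x, ‖x‖ ≤ R ∧
      ∀ z, φ x + ⟪y', z - x⟫ ≤ φ z := by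
  classical
  have hM0 : -M ≤ φ 0 := by
    have h := hball y (Metric.mem_ball_self hε) 0
    simp only [inner_zero_left, zero_sub] at h
    linarith
  set R : ℝ := 2 / ε * (M + |φ 0| + 1) with hR
  have hMabs : 0 ≤ M + |φ 0| := by
    have h1 : -|φ 0| ≤ φ 0 := neg_abs_le _
    have h2 : φ 0 ≤ |φ 0| := le_abs_self _
    linarith
  have hRpos : 0 < R := by
    rw [hR]; positivity
  refine ⟨R, hRpos.le, fun y' hy' => ?_⟩
  -- coercivity
  have hcoer : ∀ z, ε / 2 * ‖z‖ - M ≤ φ z - ⟪z, y'⟫ := by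
    intro z
    by_cases hz : z = 0
    · simp [hz]; linarith
    have hnz : (0:ℝ) < ‖z‖ := norm_pos_iff.mpr hz
    set y'' : EuclideanSpace ℝ (Fin n) := y' + (ε / (2 * ‖z‖)) • z with hy''
    have hy''ball : y'' ∈ Metric.ball y ε := by
      rw [Metric.mem_ball]
      have h1 : dist y'' y' = ε / 2 := by
        rw [dist_eq_norm, hy'']
        have : y' + (ε / (2 * ‖z‖)) • z - y' = (ε / (2 * ‖z‖)) • z := by abel
        rw [this, norm_smul, Real.norm_eq_abs, abs_of_pos (by positivity)]
        field_simp
      calc dist y'' y ≤ dist y'' y' + dist y' y := dist_triangle _ _ _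
        _ < ε / 2 + ε / 2 := by
            rw [h1]
            have := Metric.mem_ball.mp hy'
            linarith
        _ = ε := by ring
    have := hball y'' hy''ball z
    have e : ⟪z, y''⟫ = ⟪z, y'⟫ + ε / 2 * ‖z‖ := by
      rw [hy'', inner_add_right, real_inner_smul_right, real_inner_self_eq_norm_sq]
      field_simp
    rw [e] at this
    linarith
  set f : EuclideanSpace ℝ (Fin n) → ℝ := fun z => φ z - ⟪z, y'⟫ with hf
  have hfc : Continuous f := hφc.sub (continuous_id.inner continuous_const)
  have hf0 : f 0 = φ 0 := by simp [hf]
  obtain ⟨x, hxball, hxmin⟩ := (isCompact_closedBall (0 : EuclideanSpace ℝ (Fin n)) R).exists_isMinOn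
    ⟨0, Metric.mem_closedBall_self hRpos.le⟩ hfc.continuousOn
  have hxnorm : ‖x‖ ≤ R := by simpa [Metric.mem_closedBall, dist_zero_right] using hxball
  have hglobal : ∀ z, f x ≤ f z := by
    intro z
    by_cases hzball : z ∈ Metric.closedBall (0 : EuclideanSpace ℝ (Fin n)) R
    · exact hxmin hzball
    · have hznorm : R < ‖z‖ := by
        simpa [Metric.mem_closedBall, dist_zero_right, not_le] using hzball
      have h1 : f x ≤ f 0 := hxmin (Metric.mem_closedBall_self hRpos.le)
      have h2 : ε / 2 * ‖z‖ - M ≤ f z := hcoer z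
      have h3 : ε / 2 * R - M = |φ 0| + 1 := by
        rw [hR]
        field_simp
        ring
      have h4 : ε / 2 * R < ε / 2 * ‖z‖ := by
        apply mul_lt_mul_of_pos_left hznorm (by positivity)
      rw [hf0] at h1
      have h5 : φ 0 ≤ |φ 0| := le_abs_self _
      simp only [hf] at h1 h2 ⊢
      linarith
  refine ⟨x, hxnorm, fun z => ?_⟩
  have := hglobal z
  rw [hf] at this
  simp only at this
  have e : ⟪y', z - x⟫ = ⟪z, y'⟫ - ⟪x, y'⟫ := by
    rw [inner_sub_right, real_inner_comm y' z, real_inner_comm y' x]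
  linarith

lemma hasGradientAt_conj (φ : EuclideanSpace ℝ (Fin n) → ℝ) (hφc : Continuous φ)
    (C : Set (EuclideanSpace ℝ (Fin n)) → ℝ)
    (hC : ∀ K : Set (EuclideanSpace ℝ (Fin n)), IsCompact K → Convex ℝ K →
      0 < C K ∧ ConvexOn ℝ K (fun x => φ x - C K / 2 * ‖x‖ ^ 2))
    {u : EuclideanSpace ℝ (Fin n) → ℝ}
    (hu : ∀ y, u y = ⨆ x : EuclideanSpace ℝ (Fin n), (⟪x, y⟫ - φ x))
    {y : EuclideanSpace ℝ (Fin n)} {ε M R : ℝ} (hε : 0 < ε)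
    (hball : ∀ y' ∈ Metric.ball y ε, ∀ x, ⟪x, y'⟫ - φ x ≤ M) (hR : 0 ≤ R)
    (hmax : ∀ y' ∈ Metric.ball y (ε / 2), ∃ x, ‖x‖ ≤ R ∧ ∀ z, φ x + ⟪y', z - x⟫ ≤ φ z)
    {x : EuclideanSpace ℝ (Fin n)} (hx : ∀ z, φ x + ⟪y, z - x⟫ ≤ φ z) :
    HasGradientAt u x y := by
  classical
  set K₀ : Set (EuclideanSpace ℝ (Fin n)) := Metric.closedBall 0 (max R ‖x‖) with hK₀
  obtain ⟨hc₀, hconv₀⟩ := hC K₀ (isCompact_closedBall _ _) (convex_closedBall _ _)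
  set c₀ : ℝ := C K₀ with hc₀def
  have hxK : x ∈ K₀ := by
    simp only [hK₀, Metric.mem_closedBall, dist_zero_right]
    exact le_max_right _ _
  have hbdd : ∀ y' ∈ Metric.ball y ε, BddAbove (Set.range fun z => ⟪z, y'⟫ - φ z) :=
    fun y' hy' => ⟨M, by rintro _ ⟨z, rfl⟩; exact hball y' hy' z⟩
  have husub : ∀ (w : EuclideanSpace ℝ (Fin n)) (x₀ : EuclideanSpace ℝ (Fin n)),
      (∀ z, φ x₀ + ⟪w, z - x₀⟫ ≤ φ z) → u w = ⟪x₀, w⟫ - φ x₀ := by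
    intro w x₀ hx₀
    have hb : BddAbove (Set.range fun z => ⟪z, w⟫ - φ z) := by
      refine ⟨⟪x₀, w⟫ - φ x₀, ?_⟩
      rintro _ ⟨z, rfl⟩
      show ⟪z, w⟫ - φ z ≤ ⟪x₀, w⟫ - φ x₀
      have := hx₀ z
      have e : ⟪w, z - x₀⟫ = ⟪z, w⟫ - ⟪x₀, w⟫ := by
        rw [inner_sub_right, real_inner_comm w z, real_inner_comm w x₀]
      linarith
    rw [hu w]
    refine le_antisymm (ciSup_le fun z => ?_) (le_ciSup hb x₀)
    show ⟪z, w⟫ - φ z ≤ ⟪x₀, w⟫ - φ x₀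
    have := hx₀ z
    have e : ⟪w, z - x₀⟫ = ⟪z, w⟫ - ⟪x₀, w⟫ := by
      rw [inner_sub_right, real_inner_comm w z, real_inner_comm w x₀]
    linarith
  have huy : u y = ⟪x, y⟫ - φ x := husub y x hx
  rw [hasGradientAt_iff_isLittleO]
  rw [Asymptotics.isLittleO_iff]
  intro c hc
  have hδ : 0 < min (ε / 2) (c * c₀) := lt_min (by linarith) (by positivity)
  filter_upwards [Metric.ball_mem_nhds y hδ] with y' hy'
  have hy'half : y' ∈ Metric.ball y (ε / 2) :=
    Metric.mem_ball.mpr (lt_of_lt_of_le (Metric.mem_ball.mp hy') (min_le_left _ _))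
  have hy'full : y' ∈ Metric.ball y ε := by
    have := Metric.mem_ball.mp hy'half
    exact Metric.mem_ball.mpr (by linarith)
  obtain ⟨x', hx'R, hx'⟩ := hmax y' hy'half
  have hx'K : x' ∈ K₀ := by
    simp only [hK₀, Metric.mem_closedBall, dist_zero_right]
    exact le_trans hx'R (le_max_left _ _)
  have huy' : u y' = ⟪x', y'⟫ - φ x' := husub y' x' hx'
  -- strong monotonicity bound
  have hmono := strong_mono φ (convex_closedBall _ _) hconv₀ hx'K hxK hx' hx
  have hbound : ‖x' - x‖ ≤ c₀⁻¹ * ‖y' - y‖ := by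
    refine dist_bound hc₀ ?_ (norm_nonneg _) (norm_nonneg _)
    calc c₀ * ‖x' - x‖ ^ 2 ≤ ⟪y' - y, x' - x⟫ := hmono
      _ ≤ ‖y' - y‖ * ‖x' - x‖ := real_inner_le_norm _ _
  -- lower bound on the error
  have hlow : 0 ≤ u y' - u y - ⟪x, y' - y⟫ := by
    have h1 : ⟪x, y'⟫ - φ x ≤ u y' := by
      rw [hu y']; exact le_ciSup (hbdd y' hy'full) x
    have e : ⟪x, y' - y⟫ = ⟪x, y'⟫ - ⟪x, y⟫ := inner_sub_right _ _ _
    rw [huy]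
    linarith
  -- upper bound on the error
  have hup : u y' - u y - ⟪x, y' - y⟫ ≤ ⟪x' - x, y' - y⟫ := by
    rw [huy, huy']
    have h1 := hx x'
    have e1 : ⟪y, x' - x⟫ = ⟪x', y⟫ - ⟪x, y⟫ := by
      rw [inner_sub_right, real_inner_comm y x', real_inner_comm y x]
    have e2 : ⟪x, y' - y⟫ = ⟪x, y'⟫ - ⟪x, y⟫ := inner_sub_right _ _ _
    have e3 : ⟪x' - x, y' - y⟫ = ⟪x', y'⟫ - ⟪x', y⟫ - ⟪x, y'⟫ + ⟪x, y⟫ := by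
      rw [inner_sub_left, inner_sub_right, inner_sub_right]
      ring
    rw [e2, e3]
    rw [e1] at h1
    linarith
  have hinner : ⟪x' - x, y' - y⟫ ≤ c₀⁻¹ * ‖y' - y‖ * ‖y' - y‖ := by
    calc ⟪x' - x, y' - y⟫ ≤ ‖x' - x‖ * ‖y' - y‖ := real_inner_le_norm _ _
      _ ≤ c₀⁻¹ * ‖y' - y‖ * ‖y' - y‖ :=
        mul_le_mul_of_nonneg_right hbound (norm_nonneg _)
  have hnorm : ‖y' - y‖ < c * c₀ := by
    have := Metric.mem_ball.mp hy'
    rw [dist_eq_norm] at this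
    exact lt_of_lt_of_le this (min_le_right _ _)
  rw [Real.norm_eq_abs, abs_of_nonneg hlow]
  calc u y' - u y - ⟪x, y' - y⟫ ≤ c₀⁻¹ * ‖y' - y‖ * ‖y' - y‖ := le_trans hup hinner
    _ ≤ c₀⁻¹ * (c * c₀) * ‖y' - y‖ := by
        apply mul_le_mul_of_nonneg_right _ (norm_nonneg _)
        exact mul_le_mul_of_nonneg_left hnorm.le (by positivity)
    _ = c * ‖y' - y‖ := by
        field_simp

lemma closure_subgrad (φ : EuclideanSpace ℝ (Fin n) → ℝ) (hφc : Continuous φ)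
    {K : Set (EuclideanSpace ℝ (Fin n))} (hK : IsCompact K) {y : EuclideanSpace ℝ (Fin n)}
    (hy : y ∈ closure {w | ∃ x ∈ K, ∀ z, φ x + ⟪w, z - x⟫ ≤ φ z}) :
    ∃ x ∈ K, ∀ z, φ x + ⟪y, z - x⟫ ≤ φ z := by
  rcases mem_closure_iff_seq_limit.mp hy with ⟨w, hw, hwy⟩
  choose xs hxsK hxs using hw
  obtain ⟨x, hxK, g, hg, hconv⟩ := hK.tendsto_subseq hxsK
  refine ⟨x, hxK, fun z => ?_⟩
  have h1 : Filter.Tendsto (fun k => φ (xs (g k)) + ⟪w (g k), z - xs (g k)⟫) atTop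
      (𝓝 (φ x + ⟪y, z - x⟫)) := by
    apply Filter.Tendsto.add
    · exact (hφc.tendsto x).comp hconv
    · exact Filter.Tendsto.inner (hwy.comp hg.tendsto_atTop) (tendsto_const_nhds.sub hconv)
  exact le_of_tendsto h1 (Filter.Eventually.of_forall fun k => hxs (g k) z)

lemma unif_bound (φ : EuclideanSpace ℝ (Fin n) → ℝ) (hφc : Continuous φ)
    {P : Set (EuclideanSpace ℝ (Fin n))} (hP : IsOpen P)
    (hdense : P ⊆ closure {y | ∃ x, ∀ z, φ x + ⟪y, z - x⟫ ≤ φ z})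
    {K : Set (EuclideanSpace ℝ (Fin n))} (hKP : K ⊆ P) (hK : IsCompact K) :
    ∃ R : ℝ, 0 ≤ R ∧ ∀ y ∈ K, ∃ x, ‖x‖ ≤ R ∧ ∀ z, φ x + ⟪y, z - x⟫ ≤ φ z := by
  classical
  have hloc : ∀ y : EuclideanSpace ℝ (Fin n), y ∈ K → ∃ r, 0 < r ∧ ∃ R, 0 ≤ R ∧
      ∀ y' ∈ Metric.ball y r, ∃ x, ‖x‖ ≤ R ∧ ∀ z, φ x + ⟪y', z - x⟫ ≤ φ z := by
    intro y hy
    obtain ⟨ε, hε, M, hball⟩ := ball_bound φ hP hdense (hKP hy)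
    obtain ⟨R, hR0, hmax⟩ := exists_maximizer φ hφc hε hball
    exact ⟨ε / 2, by linarith, R, hR0, hmax⟩
  choose! r hr R hR0 hR using hloc
  obtain ⟨t, htK, hcov⟩ := hK.elim_nhds_subcover (fun y => Metric.ball y (r y))
    (fun y hy => Metric.ball_mem_nhds y (hr y hy))
  refine ⟨((t.sup fun y => Real.toNNReal (R y) : NNReal) : ℝ), NNReal.coe_nonneg _,
    fun y hy => ?_⟩
  obtain ⟨y₀, hy₀t, hy₀ball⟩ := Set.mem_iUnion₂.mp (hcov hy)
  obtain ⟨x, hxR, hxsub⟩ := hR y₀ (htK y₀ hy₀t) y hy₀ball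
  refine ⟨x, ?_, hxsub⟩
  calc ‖x‖ ≤ R y₀ := hxR
    _ ≤ ((Real.toNNReal (R y₀) : NNReal) : ℝ) := Real.le_coe_toNNReal _
    _ ≤ _ := NNReal.coe_le_coe.mpr (Finset.le_sup (f := fun y => Real.toNNReal (R y)) hy₀t)


end Aux

/-- If `φ : ℝⁿ → ℝ` is convex with `∇²φ ≥ C_K·I` (as measures) on every compact `K`,
i.e. `φ - C_K‖·‖²/2` is convex on `K`, and the subgradient image `∂φ(ℝⁿ)` is dense in a
bounded open convex set `P`, then `u = φ*` is `C^{1,1}_loc` on `P`: it is differentiable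
there, and on `closure(∂φ(K)) ∩ P` its distributional Hessian satisfies
`∂²u ≤ C_K⁻¹·I`, expressed by the `C_K⁻¹`-monotonicity bound on the gradient of `u`. -/
theorem legendre_C11_loc_of_positive_hessian
    (φ : EuclideanSpace ℝ (Fin n) → ℝ) (hφ : ConvexOn ℝ Set.univ φ)
    (C : Set (EuclideanSpace ℝ (Fin n)) → ℝ)
    (hC : ∀ K : Set (EuclideanSpace ℝ (Fin n)), IsCompact K → Convex ℝ K →
      0 < C K ∧ ConvexOn ℝ K (fun x => φ x - C K / 2 * ‖x‖ ^ 2))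
    (P : Set (EuclideanSpace ℝ (Fin n))) (hP : IsOpen P) (hPc : Convex ℝ P)
    (hPb : Bornology.IsBounded P)
    (hdense : P ⊆ closure (subgradImage φ Set.univ))
    (u : EuclideanSpace ℝ (Fin n) → ℝ)
    (hu : ∀ y, u y = ⨆ x : EuclideanSpace ℝ (Fin n), (⟪x, y⟫ - φ x)) :
    (∀ y ∈ P, DifferentiableAt ℝ u y) ∧
    (∀ K ⊆ P, IsCompact K → ∃ L : NNReal, LipschitzOnWith L (gradient u) K) ∧
    (∀ K : Set (EuclideanSpace ℝ (Fin n)), IsCompact K → Convex ℝ K →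
      ∀ y₁ ∈ closure (subgradImage φ K) ∩ P, ∀ y₂ ∈ closure (subgradImage φ K) ∩ P,
        ⟪gradient u y₁ - gradient u y₂, y₁ - y₂⟫ ≤ (C K)⁻¹ * ‖y₁ - y₂‖ ^ 2) := by
  have hφc : Continuous φ := continuousOn_univ.mp (hφ.continuousOn isOpen_univ)
  have hdense' : P ⊆ closure {y | ∃ x, ∀ z, φ x + ⟪y, z - x⟫ ≤ φ z} := by
    intro p hp
    have := hdense hp
    have e : subgradImage φ Set.univ = {y | ∃ x, ∀ z, φ x + ⟪y, z - x⟫ ≤ φ z} := by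
      ext w; simp [subgradImage]
    rwa [e] at this
  have hgrad : ∀ y ∈ P, ∀ x, (∀ z, φ x + ⟪y, z - x⟫ ≤ φ z) → HasGradientAt u x y := by
    intro y hy x hx
    obtain ⟨ε, hε, M, hball⟩ := ball_bound φ hP hdense' hy
    obtain ⟨R, hR0, hmax⟩ := exists_maximizer φ hφc hε hball
    exact hasGradientAt_conj φ hφc C hC hu hε hball hR0 hmax hx
  have hex : ∀ y ∈ P, ∃ x, ∀ z, φ x + ⟪y, z - x⟫ ≤ φ z := by
    intro y hy
    obtain ⟨ε, hε, M, hball⟩ := ball_bound φ hP hdense' hy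
    obtain ⟨R, hR0, hmax⟩ := exists_maximizer φ hφc hε hball
    obtain ⟨x, _, hx⟩ := hmax y (Metric.mem_ball_self (by linarith))
    exact ⟨x, hx⟩
  refine ⟨?_, ?_, ?_⟩
  · intro y hy
    obtain ⟨x, hx⟩ := hex y hy
    exact (hgrad y hy x hx).differentiableAt
  · intro K hKP hK
    obtain ⟨R, hR0, hunif⟩ := unif_bound φ hφc hP hdense' hKP hK
    set K₀ : Set (EuclideanSpace ℝ (Fin n)) := Metric.closedBall 0 R with hK₀
    obtain ⟨hc₀, hconv₀⟩ := hC K₀ (isCompact_closedBall _ _) (convex_closedBall _ _)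
    refine ⟨Real.toNNReal (C K₀)⁻¹, LipschitzOnWith.of_dist_le_mul fun y₁ h₁ y₂ h₂ => ?_⟩
    obtain ⟨x₁, hx₁R, hx₁⟩ := hunif y₁ h₁
    obtain ⟨x₂, hx₂R, hx₂⟩ := hunif y₂ h₂
    have g₁ : gradient u y₁ = x₁ := (hgrad y₁ (hKP h₁) x₁ hx₁).gradient
    have g₂ : gradient u y₂ = x₂ := (hgrad y₂ (hKP h₂) x₂ hx₂).gradient
    have hx₁K : x₁ ∈ K₀ := by
      simp only [hK₀, Metric.mem_closedBall, dist_zero_right]; exact hx₁R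
    have hx₂K : x₂ ∈ K₀ := by
      simp only [hK₀, Metric.mem_closedBall, dist_zero_right]; exact hx₂R
    have hmono := strong_mono φ (convex_closedBall _ _) hconv₀ hx₁K hx₂K hx₁ hx₂
    have hbd : ‖x₁ - x₂‖ ≤ (C K₀)⁻¹ * ‖y₁ - y₂‖ := by
      refine dist_bound hc₀ ?_ (norm_nonneg _) (norm_nonneg _)
      calc C K₀ * ‖x₁ - x₂‖ ^ 2 ≤ ⟪y₁ - y₂, x₁ - x₂⟫ := hmono
        _ ≤ ‖y₁ - y₂‖ * ‖x₁ - x₂‖ := real_inner_le_norm _ _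
    rw [dist_eq_norm, dist_eq_norm, g₁, g₂, Real.coe_toNNReal _ (by positivity)]
    exact hbd
  · intro K hK hKc y₁ hy₁ y₂ hy₂
    obtain ⟨hy₁c, hy₁P⟩ := hy₁
    obtain ⟨hy₂c, hy₂P⟩ := hy₂
    obtain ⟨x₁, hx₁K, hx₁⟩ := closure_subgrad φ hφc hK hy₁c
    obtain ⟨x₂, hx₂K, hx₂⟩ := closure_subgrad φ hφc hK hy₂c
    have g₁ : gradient u y₁ = x₁ := (hgrad y₁ hy₁P x₁ hx₁).gradient
    have g₂ : gradient u y₂ = x₂ := (hgrad y₂ hy₂P x₂ hx₂).gradient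
    obtain ⟨hcK, hconvK⟩ := hC K hK hKc
    have hmono := strong_mono φ hKc hconvK hx₁K hx₂K hx₁ hx₂
    have hbd : ‖x₁ - x₂‖ ≤ (C K)⁻¹ * ‖y₁ - y₂‖ := by
      refine dist_bound hcK ?_ (norm_nonneg _) (norm_nonneg _)
      calc C K * ‖x₁ - x₂‖ ^ 2 ≤ ⟪y₁ - y₂, x₁ - x₂⟫ := hmono
        _ ≤ ‖y₁ - y₂‖ * ‖x₁ - x₂‖ := real_inner_le_norm _ _
    rw [g₁, g₂]
    calc ⟪x₁ - x₂, y₁ - y₂⟫ ≤ ‖x₁ - x₂‖ * ‖y₁ - y₂‖ := real_inner_le_norm _ _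
      _ ≤ (C K)⁻¹ * ‖y₁ - y₂‖ * ‖y₁ - y₂‖ :=
          mul_le_mul_of_nonneg_right hbd (norm_nonneg _)
      _ = (C K)⁻¹ * ‖y₁ - y₂‖ ^ 2 := by ring
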